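/- Let Λ be the ring of integers of an imaginary quadratic-type extension and M ∈ Matₙ(Λ) invertible over the fraction field with elementary divisor ideals e₁ ∣ … ∣ eₙ satisfying ν_𝔭(N(eₙ)) ≤ ν_𝔭(m) for all primes 𝔭, where m ∈ o_K and N is the norm. Then the block matrix diag(M, m·(M*)⁻¹) has integral entries and satisfies (diag(M, m(M*)⁻¹))* J diag(M, m(M*)⁻¹) = m J. -/

import Mathlib

open Matrix

/-!
The `n`-th determinantal divisor of `M` is `(det M)`, and the `(n-1)`-st one, `D`, contains `det M`
and every entry of `adj M`. Writing `(det M) = D * E`, the hypothesis cancels in the Dedekind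
domain to `E * ι(E) ∣ (m)`, so `m ∈ E` and `m * adj M ∈ D * E = (det M)`. Applying `ι` and
transposing, `m (M*)⁻¹ = m adj(M*) / det(M*)` is integral. The similitude identity is block
multiplication: `M* * m (M*)⁻¹ = m`, and its conjugate transpose gives `(m (M*)⁻¹)* * M = m`.
-/

/-- The `k`-th determinantal divisor of `M`. -/
def detDiv {Λ : Type*} [CommRing Λ] {n : ℕ} (k : ℕ)
    (M : Matrix (Fin n) (Fin n) Λ) : Ideal Λ :=
  Ideal.span { d | ∃ f g : Fin k → Fin n,
    Function.Injective f ∧ Function.Injective g ∧ d = (M.submatrix f g).det }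

section DetDiv

variable {R : Type*} [CommRing R]

lemma submatrix_det_mem_detDiv {n k : ℕ} (A : Matrix (Fin n) (Fin n) R) {f g : Fin k → Fin n}
    (hf : Function.Injective f) (hg : Function.Injective g) :
    (A.submatrix f g).det ∈ detDiv k A :=
  Ideal.subset_span ⟨f, g, hf, hg, rfl⟩

lemma detDiv_self {n : ℕ} (A : Matrix (Fin n) (Fin n) R) :
    detDiv n A = Ideal.span {A.det} := by
  refine le_antisymm ?_ ?_
  · rw [detDiv, Ideal.span_le]
    rintro _ ⟨f, g, hf, hg, rfl⟩
    let e₁ := Equiv.ofBijective f (Finite.injective_iff_bijective.mp hf)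
    let e₂ := Equiv.ofBijective g (Finite.injective_iff_bijective.mp hg)
    have hdet : (A.submatrix f g).det = Equiv.Perm.sign e₂ * (Equiv.Perm.sign e₁ * A.det) := by
      rw [← det_permute, ← det_permute']
      rfl
    rw [SetLike.mem_coe, Ideal.mem_span_singleton, hdet]
    exact dvd_mul_of_dvd_right (dvd_mul_left _ _) _
  · rw [Ideal.span_singleton_le_iff_mem]
    simpa using submatrix_det_mem_detDiv A Function.injective_id Function.injective_id

lemma adjugate_mem_detDiv {n : ℕ} (A : Matrix (Fin (n + 1)) (Fin (n + 1)) R) (i j : Fin (n + 1)) :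
    adjugate A i j ∈ detDiv n A := by
  rw [adjugate_fin_succ_eq_det_submatrix]
  exact Ideal.mul_mem_left _ _ (submatrix_det_mem_detDiv A
    Fin.succAbove_right_injective Fin.succAbove_right_injective)

lemma det_mem_detDiv {n : ℕ} (A : Matrix (Fin (n + 1)) (Fin (n + 1)) R) :
    A.det ∈ detDiv n A := by
  rw [det_succ_row_zero]
  exact Ideal.sum_mem _ fun j _ => Ideal.mul_mem_left _ _ (submatrix_det_mem_detDiv A
    (Fin.succ_injective _) Fin.succAbove_right_injective)

end DetDiv

lemma Ideal.mem_of_mul_dvd_mul_span_singleton {R : Type*} [CommRing R] [IsDedekindDomain R]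
    {D D' E E' : Ideal R} {m : R} (hD : D * D' ≠ 0)
    (h : D * E * (D' * E') ∣ Ideal.span {m} * D * D') : m ∈ E := by
  have hEE' : D * D' * (E * E') ∣ D * D' * Ideal.span {m} := by
    have e₁ : D * D' * (E * E') = D * E * (D' * E') := mul_mul_mul_comm _ _ _ _
    have e₂ : D * D' * Ideal.span {m} = Ideal.span {m} * D * D' := by rw [mul_comm, mul_assoc]
    rwa [e₁, e₂]
  have hm : Ideal.span {m} ≤ E * E' := Ideal.le_of_dvd ((mul_dvd_mul_iff_left hD).mp hEE')
  exact Ideal.mul_le_left (hm (Ideal.mem_span_singleton_self m))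

namespace Matrix

lemma det_dvd_mul_adjugate_of_detDiv_dvd {R : Type*} [CommRing R] [IsDedekindDomain R]
    {σ : R →+* R} (hσ : Function.Injective σ) {n : ℕ} {m : R} {M : Matrix (Fin n) (Fin n) R}
    (hM : M.det ≠ 0)
    (hdiv : detDiv n M * (detDiv n M).map σ ∣
      Ideal.span {m} * detDiv (n - 1) M * (detDiv (n - 1) M).map σ) (i j : Fin n) :
    M.det ∣ m * adjugate M i j := by
  obtain _ | n := n
  · exact i.elim0
  set D := detDiv n M
  obtain ⟨E, hE⟩ : D ∣ Ideal.span {M.det} :=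
    Ideal.dvd_iff_le.mpr ((Ideal.span_singleton_le_iff_mem _).mpr (det_mem_detDiv M))
  have hD : D ≠ ⊥ := fun h => hM (by rw [← Ideal.mem_bot, ← h]; exact det_mem_detDiv M)
  have hDσ : D.map σ ≠ ⊥ := (Ideal.map_eq_bot_iff_of_injective hσ).not.mpr hD
  rw [Nat.add_sub_cancel, detDiv_self, hE, Ideal.map_mul] at hdiv
  have hmE : m ∈ E := Ideal.mem_of_mul_dvd_mul_span_singleton (mul_ne_zero hD hDσ) hdiv
  rw [← Ideal.mem_span_singleton, hE, mul_comm D E]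
  exact Ideal.mul_mem_mul hmE (adjugate_mem_detDiv M i j)

variable {R : Type*} [CommRing R] {n : Type*} [Fintype n] [DecidableEq n]

lemma det_dvd_mul_adjugate_map_transpose {σ : R →+* R} {c : R} (hc : σ c = c)
    {M : Matrix n n R} (h : ∀ i j, M.det ∣ c * adjugate M i j) (i j : n) :
    ((M.map σ)ᵀ).det ∣ c * adjugate (M.map σ)ᵀ i j := by
  have hdet : (M.map σ).det = σ M.det := (σ.map_det M).symm
  have hadj : adjugate (M.map σ) j i = σ (adjugate M j i) :=
    congrFun (congrFun (σ.map_adjugate M) j) i |>.symm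
  rw [det_transpose, ← adjugate_transpose, transpose_apply, hdet, hadj, ← hc, ← map_mul]
  exact map_dvd σ (h j i)

lemma exists_map_eq_smul_inv_of_det_dvd {K : Type*} [Field K] [Algebra R K]
    [IsFractionRing R K] {c : R} {N : Matrix n n R} (hN : N.det ≠ 0)
    (h : ∀ i j, N.det ∣ c * adjugate N i j) :
    ∃ P : Matrix n n R, P.map (algebraMap R K) = algebraMap R K c • (N.map (algebraMap R K))⁻¹ := by
  choose P hP using h
  refine ⟨of P, ?_⟩
  have hdet : algebraMap R K N.det ≠ 0 :=
    (map_ne_zero_iff _ (IsFractionRing.injective R K)).mpr hN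
  have hdetK : (N.map (algebraMap R K)).det = algebraMap R K N.det :=
    ((algebraMap R K).map_det N).symm
  have hadjK : adjugate (N.map (algebraMap R K)) = (adjugate N).map (algebraMap R K) :=
    ((algebraMap R K).map_adjugate N).symm
  ext i j
  rw [inv_def, Ring.inverse_eq_inv', hdetK, hadjK]
  simp only [map_apply, smul_apply, of_apply, smul_eq_mul]
  field_simp
  rw [← map_mul, ← map_mul, hP, mul_comm]

lemma fromBlocks_similitude {σ : R →+* R} (hσ : ∀ x, σ (σ x) = x) {c : R} (hc : σ c = c)
    {A : Matrix n n R} (hA : IsUnit A.det) :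
    let S := fromBlocks A 0 0 (c • ((A.map σ)ᵀ)⁻¹)
    (S.map σ)ᵀ * fromBlocks 0 1 (-1) 0 * S = c • fromBlocks 0 1 (-1) 0 := by
  have hA' : IsUnit ((A.map σ)ᵀ).det := by
    rw [det_transpose, ← RingHom.mapMatrix_apply, ← RingHom.map_det]; exact hA.map σ
  have hAB : (A.map σ)ᵀ * (c • ((A.map σ)ᵀ)⁻¹) = c • 1 := by
    rw [Matrix.mul_smul, mul_nonsing_inv _ hA']
  have hBA : ((c • ((A.map σ)ᵀ)⁻¹).map σ)ᵀ * A = c • 1 := by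
    have hAA : ((A.map σ)ᵀ.map σ)ᵀ = A := by ext i j; exact hσ (A i j)
    have hc1 : ((c • (1 : Matrix n n R)).map σ)ᵀ = c • 1 := by
      ext i j; by_cases h : i = j <;> simp [h, Ne.symm, hc]
    simpa only [Matrix.map_mul, transpose_mul, hAA, hc1] using congrArg (fun X ↦ (X.map σ)ᵀ) hAB
  intro S
  simp only [S, fromBlocks_map, fromBlocks_transpose, fromBlocks_multiply]
  simp [hAB, hBA, fromBlocks_smul]

end Matrix

theorem stmt17_general (Λ : Type*) [CommRing Λ] [IsDedekindDomain Λ]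
    (ιΛ : Λ →+* Λ) (hιΛ : ∀ x, ιΛ (ιΛ x) = x)
    (ιΩ : FractionRing Λ →+* FractionRing Λ) (hιΩ : ∀ x, ιΩ (ιΩ x) = x)
    (hcomp : ∀ x : Λ, ιΩ (algebraMap Λ (FractionRing Λ) x)
      = algebraMap Λ (FractionRing Λ) (ιΛ x))
    (n : ℕ) (m : Λ) (hm : ιΛ m = m)
    (M : Matrix (Fin n) (Fin n) Λ) (hM : M.det ≠ 0)
    (hdiv : detDiv n M * (detDiv n M).map ιΛ ∣
      Ideal.span {m} * detDiv (n - 1) M * ((detDiv (n - 1) M).map ιΛ)) :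
    let f := algebraMap Λ (FractionRing Λ)
    let Mstar := ((M.map f).map ιΩ)ᵀ
    let S : Matrix (Fin n ⊕ Fin n) (Fin n ⊕ Fin n) (FractionRing Λ) :=
      Matrix.fromBlocks (M.map f) 0 0 (f m • Mstar⁻¹)
    (∃ P : Matrix (Fin n) (Fin n) Λ, P.map f = f m • Mstar⁻¹) ∧
    ((S.map ιΩ)ᵀ) * (Matrix.fromBlocks 0 1 (-1) 0) * S
      = f m • (Matrix.fromBlocks 0 1 (-1) 0) := by
  intro f Mstar S
  have hιΛ_inj : Function.Injective ιΛ := Function.LeftInverse.injective hιΛ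
  have hf_inj : Function.Injective f := IsFractionRing.injective Λ (FractionRing Λ)
  have hMstar : Mstar = ((M.map ιΛ)ᵀ).map f := by ext i j; exact hcomp (M j i)
  have hdet_conj : ((M.map ιΛ)ᵀ).det ≠ 0 := by
    rw [det_transpose, ← RingHom.mapMatrix_apply, ← RingHom.map_det]
    exact (map_ne_zero_iff _ hιΛ_inj).mpr hM
  have hdet_f : IsUnit (M.map f).det := by
    rw [← RingHom.mapMatrix_apply, ← RingHom.map_det]
    exact ((map_ne_zero_iff _ hf_inj).mpr hM).isUnit
  refine ⟨?_, fromBlocks_similitude hιΩ (by rw [hcomp, hm]) hdet_f⟩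
  rw [hMstar]
  exact exists_map_eq_smul_inv_of_det_dvd hdet_conj (det_dvd_mul_adjugate_map_transpose hm
    (det_dvd_mul_adjugate_of_detDiv_dvd hιΛ_inj hM hdiv))

/-- Let `Λ` be a Dedekind domain (e.g. the ring of integers in a quadratic
extension) with involution `ιΛ`, extended to `ιΩ` on the fraction field `Ω`,
and let `m` be fixed by `ιΛ`.  If `M ∈ Matₙ(Λ)` is invertible over `Ω` and
its last elementary divisor `eₙ = dₙ/d_{n-1}` satisfies
`ν_𝔭(N(eₙ)) ≤ ν_𝔭(m)` at every prime — expressed by the divisibility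
`dₙ · ι(dₙ) ∣ (m) · d_{n-1} · ι(d_{n-1})` of ideals — then `m (M*)⁻¹` is
integral, and `diag(M, m (M*)⁻¹)` is a similitude matrix of factor `m`:
`S* J S = m • J` for `S = diag(M, m (M*)⁻¹)`. -/
theorem stmt17 (Λ : Type*) [CommRing Λ] [IsDedekindDomain Λ]
    (ιΛ : Λ →+* Λ) (hιΛ : ∀ x, ιΛ (ιΛ x) = x)
    (ιΩ : FractionRing Λ →+* FractionRing Λ) (hιΩ : ∀ x, ιΩ (ιΩ x) = x)
    (hcomp : ∀ x : Λ, ιΩ (algebraMap Λ (FractionRing Λ) x)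
      = algebraMap Λ (FractionRing Λ) (ιΛ x))
    (n : ℕ) (m : Λ) (hm : ιΛ m = m) (hm0 : m ≠ 0)
    (M : Matrix (Fin n) (Fin n) Λ) (hM : M.det ≠ 0)
    (hdiv : detDiv n M * (detDiv n M).map ιΛ ∣
      Ideal.span {m} * detDiv (n - 1) M * ((detDiv (n - 1) M).map ιΛ)) :
    let f := algebraMap Λ (FractionRing Λ)
    let Mstar := ((M.map f).map ιΩ)ᵀ
    let S : Matrix (Fin n ⊕ Fin n) (Fin n ⊕ Fin n) (FractionRing Λ) :=
      Matrix.fromBlocks (M.map f) 0 0 (f m • Mstar⁻¹)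
    (∃ P : Matrix (Fin n) (Fin n) Λ, P.map f = f m • Mstar⁻¹) ∧
    ((S.map ιΩ)ᵀ) * (Matrix.fromBlocks 0 1 (-1) 0) * S
      = f m • (Matrix.fromBlocks 0 1 (-1) 0) :=
  stmt17_general Λ ιΛ hιΛ ιΩ hιΩ hcomp n m hm M hM hdiv
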